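/- Let (X, φ) and (Y, ψ) be measure-preserving systems on probability spaces X = (X, Σ, μ) and Y = (Y, Σ', ν), and suppose (Y, ψ) is a factor of (X, φ). If the Koopman operator T_ψ on L²(Y) has a countable Lebesgue component, then so does the Koopman operator T_φ on L²(X). -/

import Mathlib

open MeasureTheory

/-- A linear operator `S : L²(Y) → L²(X)` between the real `L²` spaces of two probability
spaces is a *Markov operator* if it is positive (`f ≥ 0 ⟹ S f ≥ 0`) and maps the constant
function `1` to the constant function `1`. -/
def IsMarkov {Y X : Type*} [MeasurableSpace Y] [MeasurableSpace X]
    (ν : MeasureTheory.Measure Y) (μ : MeasureTheory.Measure X)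
    (S : MeasureTheory.Lp ℝ 2 ν →ₗ[ℝ] MeasureTheory.Lp ℝ 2 μ) : Prop :=
  (∀ g : MeasureTheory.Lp ℝ 2 ν, 0 ≤ g → 0 ≤ S g) ∧
  (∀ g : MeasureTheory.Lp ℝ 2 ν, (g : Y → ℝ) =ᵐ[ν] (fun _ => 1) →
    ((S g : MeasureTheory.Lp ℝ 2 μ) : X → ℝ) =ᵐ[μ] fun _ => 1)

/-- An isometric linear operator `T` on a real Hilbert space has a *countable Lebesgue
component* if there is an orthonormal family `e : ℕ × ℤ → H` with `T (e (n, k)) = e (n, k+1)`.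
(Equivalently: `H₀ := closed span of the e (n, k)` is a closed separable subspace with
`T H₀ = H₀` on which `T` has countable Lebesgue spectrum, the `xₙ := e (n, 0)` forming the
orthonormal sequence whose orbits `(T^k xₙ)_{k ∈ ℤ} = (e (n, k))_{k ∈ ℤ}` are orthonormal
bases of the cyclic subspaces `Z(xₙ; T)` with `H₀ = ⊕ₙ Z(xₙ; T)`.) -/
def HasCountableLebesgueComponent {H : Type*} [NormedAddCommGroup H]
    [InnerProductSpace ℝ H] (T : H → H) : Prop :=
  ∃ e : ℕ × ℤ → H, Orthonormal ℝ e ∧ ∀ (n : ℕ) (k : ℤ), T (e (n, k)) = e (n, k + 1)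

open Polynomial Filter Topology
open scoped RealInnerProductSpace NNReal ENNReal

/-!
Let `e` be a Lebesgue family of `T_ψ` and `K` its closed span: `T_ψ` restricts to a unitary `V`
of `K` that still has a countable Lebesgue component. Positive operators between Banach lattices
are bounded, so `A := S|_K` is an injective bounded operator with `A V = T_φ A`. Because `T_φ` is
an isometry and `V` is unitary, `V` commutes with `A† A` and hence with its positive square root
`R`, which is obtained as the strong limit of Riesz's monotone polynomial iteration. As
`‖R x‖ = ‖A x‖` and `R` has dense range, `R x ↦ A x` extends to an isometry `W : K → L²(X)` with
`W V = T_φ W` (polar decomposition), and `W ∘ e` is a Lebesgue family for `T_φ`.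
-/

namespace ContinuousLinearMap

variable {K : Type*} [NormedAddCommGroup K] [InnerProductSpace ℝ K]

lemma IsPositive.inner_sq_le {P : K →L[ℝ] K} (hP : P.IsPositive) (x y : K) :
    ⟪P x, y⟫ ^ 2 ≤ ⟪P x, x⟫ * ⟪P y, y⟫ := by
  have hyx : ⟪P y, x⟫ = ⟪P x, y⟫ := by rw [hP.inner_left_eq_inner_right, real_inner_comm]
  have hquad : ∀ t : ℝ, 0 ≤ ⟪P y, y⟫ * (t * t) + 2 * ⟪P x, y⟫ * t + ⟪P x, x⟫ := fun t => by
    have h := hP.inner_nonneg_left (x + t • y)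
    simp only [map_add, map_smul, inner_add_left, inner_add_right, real_inner_smul_left,
      real_inner_smul_right, hyx] at h
    linarith
  have hd := discrim_le_zero hquad
  rw [discrim] at hd
  linarith

lemma inner_le_of_le_one {P : K →L[ℝ] K} (h : P ≤ 1) (x : K) : ⟪P x, x⟫ ≤ ‖x‖ ^ 2 := by
  have := ((le_def P 1).mp h).inner_nonneg_left x
  rwa [sub_apply, one_apply_eq_self, inner_sub_left, real_inner_self_eq_norm_sq, sub_nonneg] at this

lemma le_one_of_inner_le {P : K →L[ℝ] K} (hP : P.IsSymmetric) (h : ∀ x, ⟪P x, x⟫ ≤ ‖x‖ ^ 2) :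
    P ≤ 1 := by
  refine (le_def P 1).mpr ((isPositive_iff _).mpr ⟨fun x y => ?_, fun x => ?_⟩)
  · simpa [inner_sub_left, inner_sub_right] using hP x y
  · rw [sub_apply, one_apply_eq_self, inner_sub_left, real_inner_self_eq_norm_sq, sub_nonneg]
    exact h x

lemma norm_sq_le_inner_of_nonneg_of_le_one {P : K →L[ℝ] K} (h0 : 0 ≤ P) (h1 : P ≤ 1) (x : K) :
    ‖P x‖ ^ 2 ≤ ⟪P x, x⟫ := by
  have hP := (nonneg_iff_isPositive P).mp h0
  have hcs := hP.inner_sq_le x (P x)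
  rw [real_inner_self_eq_norm_sq] at hcs
  nlinarith [inner_le_of_le_one h1 (P x), hP.inner_nonneg_left x, sq_nonneg ‖P x‖]

lemma norm_apply_le_of_nonneg_of_le_one {P : K →L[ℝ] K} (h0 : 0 ≤ P) (h1 : P ≤ 1) (x : K) :
    ‖P x‖ ≤ ‖x‖ :=
  (pow_le_pow_iff_left₀ (norm_nonneg _) (norm_nonneg _) two_ne_zero).mp
    ((norm_sq_le_inner_of_nonneg_of_le_one h0 h1 x).trans (inner_le_of_le_one h1 x))

variable [CompleteSpace K]

lemma IsPositive.pow {D : K →L[ℝ] K} (hD : D.IsPositive) (k : ℕ) : (D ^ k).IsPositive := by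
  have hconj : ∀ m r : ℕ, D ^ (2 * m + r) = adjoint (D ^ m) ∘L (D ^ r) ∘L (D ^ m) := fun m r => by
    rw [(hD.isSelfAdjoint.pow m).adjoint_eq, ← mul_def, ← mul_def, ← pow_add, ← pow_add]
    ring_nf
  obtain ⟨m, rfl | rfl⟩ := Nat.even_or_odd' k
  · rw [← add_zero (2 * m), hconj m 0, pow_zero]
    exact isPositive_one.adjoint_conj (D ^ m)
  · rw [hconj m 1, pow_one]
    exact hD.adjoint_conj (D ^ m)

lemma IsPositive.aeval {D : K →L[ℝ] K} (hD : D.IsPositive) (p : ℝ≥0[X]) :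
    (aeval D p).IsPositive := by
  rw [aeval_eq_sum_range]
  refine isPositive_sum _ fun i _ => ?_
  rw [NNReal.smul_def]
  exact (hD.pow i).smul_of_nonneg (p.coeff i).2

theorem exists_tendsto_apply_of_monotone {P : ℕ → K →L[ℝ] K} (hP : Monotone P) (h0 : 0 ≤ P 0)
    (h1 : ∀ n, P n ≤ 1) : ∃ L : K →L[ℝ] K, ∀ x, Tendsto (fun n => P n x) atTop (𝓝 (L x)) := by
  have hdiff : ∀ {n m}, n ≤ m → ∀ x, ‖P m x - P n x‖ ^ 2 ≤ ⟪P m x, x⟫ - ⟪P n x, x⟫ := by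
    intro n m hnm x
    have hpos : (P m - P n).IsPositive := (le_def _ _).mp (hP hnm)
    have hle : P m - P n ≤ 1 := by
      have hn : (P n - 0).IsPositive := (le_def _ _).mp (h0.trans (hP (Nat.zero_le n)))
      rw [le_def, show 1 - (P m - P n) = (1 - P m) + (P n - 0) by abel]
      exact ((le_def _ _).mp (h1 m)).add hn
    simpa [inner_sub_left] using
      norm_sq_le_inner_of_nonneg_of_le_one ((nonneg_iff_isPositive _).mpr hpos) hle x
  have hcauchy : ∀ x, CauchySeq fun n => P n x := by
    intro x
    have hmono : Monotone fun n => ⟪P n x, x⟫ := fun n m hnm => by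
      linarith [hdiff hnm x, sq_nonneg ‖P m x - P n x‖]
    have hbdd : BddAbove (Set.range fun n => ⟪P n x, x⟫) :=
      ⟨‖x‖ ^ 2, by rintro _ ⟨n, rfl⟩; exact inner_le_of_le_one (h1 n) x⟩
    have ha := Metric.cauchySeq_iff'.mp (tendsto_atTop_ciSup hmono hbdd).cauchySeq
    refine Metric.cauchySeq_iff'.mpr fun ε hε => ?_
    obtain ⟨N, hN⟩ := ha (ε ^ 2) (by positivity)
    refine ⟨N, fun n hn => ?_⟩
    have h := (hdiff hn x).trans_lt ((le_abs_self _).trans_lt (hN n hn))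
    rw [dist_eq_norm]
    exact lt_of_pow_lt_pow_left₀ 2 hε.le h
  choose f hf using fun x => cauchySeq_tendsto_of_complete (hcauchy x)
  exact ⟨continuousLinearMapOfTendsto P (tendsto_pi_nhds.mpr hf), hf⟩

end ContinuousLinearMap

lemma Commute.aeval_right {R A : Type*} [CommSemiring R] [Semiring A] [Algebra R A] {a b : A}
    (h : Commute a b) (p : R[X]) : Commute a (aeval b p) := by
  rw [aeval_eq_sum_range]
  exact Commute.sum_right _ _ _ fun i _ => (h.pow_right i).smul_right _

/-- Riesz's polynomials: evaluated at `1 - B` they increase to `1 - √B`. -/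
noncomputable def sqrtApprox : ℕ → ℝ≥0[X]
  | 0 => 0
  | n + 1 => C 2⁻¹ * (X + sqrtApprox n ^ 2)

lemma exists_sqrtApprox_succ_eq_add (n : ℕ) : ∃ q, sqrtApprox (n + 1) = sqrtApprox n + q := by
  induction n with
  | zero => exact ⟨_, (zero_add _).symm⟩
  | succ n ih =>
    obtain ⟨q, hq⟩ := ih
    -- with `p := sqrtApprox`: `p (n + 2) - p (n + 1) = (p (n + 1) + p n) (p (n + 1) - p n) / 2`
    refine ⟨C 2⁻¹ * ((sqrtApprox (n + 1) + sqrtApprox n) * q), ?_⟩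
    calc sqrtApprox (n + 2) = C 2⁻¹ * (X + sqrtApprox (n + 1) ^ 2) := rfl
      _ = C 2⁻¹ * (X + sqrtApprox n ^ 2) + C 2⁻¹ * ((sqrtApprox (n + 1) + sqrtApprox n) * q) := by
        rw [hq]; ring
      _ = _ := rfl

namespace ContinuousLinearMap

variable {K : Type*} [NormedAddCommGroup K] [InnerProductSpace ℝ K]

lemma aeval_sqrtApprox_succ (D : K →L[ℝ] K) (n : ℕ) :
    aeval D (sqrtApprox (n + 1))
      = (2 : ℝ)⁻¹ • (D + aeval D (sqrtApprox n) * aeval D (sqrtApprox n)) := by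
  simp [sqrtApprox, sq, Algebra.algebraMap_eq_smul_one, NNReal.smul_def]

variable [CompleteSpace K]

lemma monotone_aeval_sqrtApprox {D : K →L[ℝ] K} (hD : D.IsPositive) :
    Monotone fun n => aeval D (sqrtApprox n) :=
  monotone_nat_of_le_succ fun n => by
    obtain ⟨q, hq⟩ := exists_sqrtApprox_succ_eq_add n
    simpa [le_def, hq] using hD.aeval q

lemma aeval_sqrtApprox_le_one {D : K →L[ℝ] K} (hD : D.IsPositive) (hD1 : D ≤ 1) (n : ℕ) :
    aeval D (sqrtApprox n) ≤ 1 := by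
  induction n with
  | zero => simp [sqrtApprox, le_def]
  | succ n ih =>
    set P := aeval D (sqrtApprox n)
    have hP := hD.aeval (sqrtApprox n)
    refine le_one_of_inner_le (hD.aeval _).isSymmetric fun x => ?_
    have hsq : ⟪(P * P) x, x⟫ = ‖P x‖ ^ 2 := by
      rw [mul_apply_eq_comp, hP.inner_left_eq_inner_right, real_inner_self_eq_norm_sq]
    have hPx := norm_apply_le_of_nonneg_of_le_one ((nonneg_iff_isPositive _).mpr hP) ih x
    rw [aeval_sqrtApprox_succ, smul_apply, real_inner_smul_left, add_apply, inner_add_left, hsq]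
    nlinarith [inner_le_of_le_one hD1 x, norm_nonneg (P x)]

theorem exists_sqrt_of_le_one {B : K →L[ℝ] K} (h0 : 0 ≤ B) (h1 : B ≤ 1) :
    ∃ R : K →L[ℝ] K, 0 ≤ R ∧ R * R = B ∧ ∀ W, Commute W B → Commute W R := by
  set D := 1 - B
  have hD : D.IsPositive := (le_def _ _).mp h1
  have hD1 : D ≤ 1 := (le_def _ _).mpr (by simpa [D] using (nonneg_iff_isPositive B).mp h0)
  set P : ℕ → K →L[ℝ] K := fun n => aeval D (sqrtApprox n)
  have hP : ∀ n, (P n).IsPositive := fun n => hD.aeval _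
  have hPsucc : ∀ n, P (n + 1) = (2 : ℝ)⁻¹ • (D + P n * P n) := aeval_sqrtApprox_succ D
  obtain ⟨L, hL⟩ := exists_tendsto_apply_of_monotone (P := P) (monotone_aeval_sqrtApprox hD)
    (by simp [P, sqrtApprox]) (aeval_sqrtApprox_le_one hD hD1)
  have hLsymm : ∀ x y, ⟪L x, y⟫ = ⟪x, L y⟫ := fun x y =>
    tendsto_nhds_unique
      (((hL x).inner tendsto_const_nhds).congr fun n => (hP n).inner_left_eq_inner_right x y)
      (tendsto_const_nhds.inner (hL y))
  have hLle : ∀ x, ⟪L x, x⟫ ≤ ‖x‖ ^ 2 := fun x =>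
    le_of_tendsto ((hL x).inner tendsto_const_nhds)
      (Eventually.of_forall fun n => inner_le_of_le_one (aeval_sqrtApprox_le_one hD hD1 n) x)
  have hfix : L + L = D + L * L := by
    ext x
    refine ext_inner_right ℝ fun y => ?_
    have hlim : Tendsto (fun n => ⟪P (n + 1) x, y⟫) atTop
        (𝓝 ((2 : ℝ)⁻¹ * (⟪D x, y⟫ + ⟪L x, L y⟫))) :=
      ((tendsto_const_nhds.add ((hL x).inner (hL y))).const_mul _).congr fun n => by
        rw [hPsucc, smul_apply, real_inner_smul_left, add_apply, inner_add_left, mul_apply_eq_comp, (hP n).inner_left_eq_inner_right (P n x)]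
    have h := tendsto_nhds_unique
      (((hL x).comp (tendsto_add_atTop_nat 1)).inner tendsto_const_nhds) hlim
    rw [add_apply, add_apply, mul_apply_eq_comp, inner_add_left, inner_add_left, hLsymm (L x)]
    linarith
  refine ⟨1 - L, (nonneg_iff_isPositive _).mpr ((le_def L 1).mp (le_one_of_inner_le hLsymm hLle)),
    ?_, fun W hW => ?_⟩
  · calc (1 - L) * (1 - L) = 1 - (L + L) + L * L := by noncomm_ring
      _ = B := by rw [hfix]; simp only [D]; abel
  · have hWP : ∀ n, Commute W (P n) := fun n => ((Commute.one_right W).sub_right hW).aeval_right _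
    have hWL : Commute W L := ContinuousLinearMap.ext fun x =>
      tendsto_nhds_unique ((W.continuous.tendsto _).comp (hL x))
        ((hL (W x)).congr fun n => (DFunLike.congr_fun (hWP n).eq x).symm)
    exact (Commute.one_right W).sub_right hWL

theorem exists_sqrt {B : K →L[ℝ] K} (hB : 0 ≤ B) :
    ∃ R : K →L[ℝ] K, 0 ≤ R ∧ R * R = B ∧ ∀ W, Commute W B → Commute W R := by
  have hBpos := (nonneg_iff_isPositive B).mp hB
  set s := ‖B‖ + 1
  have hs : 0 < s := by positivity
  have hB1 : s⁻¹ • B ≤ 1 := by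
    refine le_one_of_inner_le (hBpos.smul_of_nonneg (by positivity)).isSymmetric fun x => ?_
    rw [smul_apply, real_inner_smul_left, inv_mul_le_iff₀ hs]
    nlinarith [real_inner_le_norm (B x) x, B.le_opNorm x, norm_nonneg x, norm_nonneg (B x)]
  obtain ⟨R, hR0, hRR, hRcomm⟩ := exists_sqrt_of_le_one
    ((nonneg_iff_isPositive _).mpr (hBpos.smul_of_nonneg (by positivity))) hB1
  refine ⟨√s • R, ?_, ?_, fun W hW => (hRcomm W (hW.smul_right _)).smul_right _⟩
  · exact (nonneg_iff_isPositive _).mpr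
      (((nonneg_iff_isPositive R).mp hR0).smul_of_nonneg (Real.sqrt_nonneg s))
  · rw [smul_mul_smul, Real.mul_self_sqrt hs.le, hRR, smul_smul, mul_inv_cancel₀ hs.ne', one_smul]

variable {H : Type*} [NormedAddCommGroup H] [InnerProductSpace ℝ H] [CompleteSpace H]

lemma commute_adjoint_comp_self_of_comp_eq {V : K →L[ℝ] K} {T : H →L[ℝ] H} {A : K →L[ℝ] H}
    (hV : V ∘L adjoint V = 1) (hT : adjoint T ∘L T = 1) (hAV : A ∘L V = T ∘L A) :
    Commute V (adjoint A ∘L A) := by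
  have hconj : adjoint V ∘L (adjoint A ∘L A) ∘L V = adjoint A ∘L A :=
    calc adjoint V ∘L (adjoint A ∘L A) ∘L V = adjoint (A ∘L V) ∘L (A ∘L V) := by
          simp only [adjoint_comp, comp_assoc]
      _ = adjoint A ∘L (adjoint T ∘L T) ∘L A := by simp only [hAV, adjoint_comp, comp_assoc]
      _ = adjoint A ∘L A := by rw [hT, one_def, id_comp]
  calc V * (adjoint A ∘L A) = V ∘L (adjoint V ∘L (adjoint A ∘L A) ∘L V) := by rw [hconj, mul_def]
    _ = (V ∘L adjoint V) ∘L (adjoint A ∘L A) ∘L V := by simp only [comp_assoc]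
    _ = (adjoint A ∘L A) * V := by rw [hV, one_def, id_comp, mul_def]

theorem exists_linearIsometry_comp_eq {A : K →L[ℝ] H} (hA : Function.Injective A)
    {V : K →L[ℝ] K} {T : H →L[ℝ] H} (hAV : A ∘L V = T ∘L A) (hVA : Commute V (adjoint A ∘L A)) :
    ∃ W : K →ₗᵢ[ℝ] H, ∀ x, W (V x) = T (W x) := by
  obtain ⟨R, hR0, hRR, hRcomm⟩ :=
    exists_sqrt ((nonneg_iff_isPositive _).mpr (isPositive_adjoint_comp_self A))
  have hR := (nonneg_iff_isPositive R).mp hR0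
  have hnorm : ∀ x, ‖A x‖ = ‖R x‖ := fun x => by
    refine (pow_left_inj₀ (norm_nonneg _) (norm_nonneg _) two_ne_zero).mp ?_
    rw [← real_inner_self_eq_norm_sq, ← real_inner_self_eq_norm_sq,
      hR.inner_left_eq_inner_right, ← mul_apply_eq_comp, hRR, comp_apply, adjoint_inner_right]
  have hRinj : Function.Injective R := fun x y hxy => hA <| by
    rw [← sub_eq_zero, ← map_sub, ← norm_eq_zero, hnorm, map_sub, hxy, sub_self, norm_zero]
  have hRdense : DenseRange R := by
    have h : (LinearMap.range (R : K →ₗ[ℝ] K))ᗮ = ⊥ := by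
      rw [hR.isSymmetric.orthogonal_range, LinearMap.ker_eq_bot]
      exact hRinj
    exact Submodule.dense_iff_topologicalClosure_eq_top.mpr
      (Submodule.topologicalClosure_eq_top_iff.mpr h)
  set W := (A : K →ₗ[ℝ] H).extendOfNorm (R : K →ₗ[ℝ] K)
  have hWR : ∀ x, W (R x) = A x :=
    LinearMap.extendOfNorm_eq hRdense ⟨1, fun x => by simp [hnorm]⟩
  have hWnorm : ∀ z, ‖W z‖ = ‖z‖ := fun z =>
    hRdense.induction_on z (isClosed_eq (by fun_prop) (by fun_prop)) fun x => by rw [hWR, hnorm]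
  refine ⟨⟨W.toLinearMap, hWnorm⟩, fun z => ?_⟩
  have h := hRdense.equalizer (W.comp V).continuous (T.comp W).continuous <| funext fun x => by
    have hVR : V (R x) = R (V x) := DFunLike.congr_fun (hRcomm V hVA).eq x
    simp only [Function.comp_apply, comp_apply, hVR, hWR]
    exact DFunLike.congr_fun hAV x
  exact congr_fun h z

end ContinuousLinearMap

namespace HasCountableLebesgueComponent

variable {K H : Type*} [NormedAddCommGroup K] [InnerProductSpace ℝ K]
  [NormedAddCommGroup H] [InnerProductSpace ℝ H]

lemma of_linearIsometry_comp_eq {V : K → K} {T : H → H} (W : K →ₗᵢ[ℝ] H)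
    (hW : ∀ x, W (V x) = T (W x)) (h : HasCountableLebesgueComponent V) :
    HasCountableLebesgueComponent T :=
  let ⟨e, he, hshift⟩ := h
  ⟨W ∘ e, he.comp_linearIsometry W, fun n k => by simp only [Function.comp_apply, ← hW, hshift]⟩

theorem exists_linearIsometryEquiv_restrict [CompleteSpace H] {T : H →L[ℝ] H}
    (hT : ∀ x, ‖T x‖ = ‖x‖) (h : HasCountableLebesgueComponent T) :
    ∃ (K : Submodule ℝ H) (V : K ≃ₗᵢ[ℝ] K), IsClosed (K : Set H) ∧ (∀ x, (V x : H) = T x) ∧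
      HasCountableLebesgueComponent V := by
  obtain ⟨e, he, hshift⟩ := h
  set K := (Submodule.span ℝ (Set.range e)).topologicalClosure
  have hK : IsClosed (K : Set H) := Submodule.isClosed_topologicalClosure _
  have he_mem : ∀ i, e i ∈ K := fun i =>
    Submodule.le_topologicalClosure _ (Submodule.subset_span ⟨i, rfl⟩)
  have hmaps : K.map (T : H →ₗ[ℝ] H) ≤ K := by
    refine (Submodule.topologicalClosure_map T _).trans (Submodule.topologicalClosure_mono ?_)
    rw [Submodule.map_span, Submodule.span_le]
    rintro _ ⟨_, ⟨⟨n, k⟩, rfl⟩, rfl⟩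
    exact Submodule.subset_span ⟨(n, k + 1), (hshift n k).symm⟩
  have honto : K ≤ K.map (T : H →ₗ[ℝ] H) := by
    refine Submodule.topologicalClosure_minimal _ ?_ ?_
    · rw [Submodule.span_le]
      rintro _ ⟨⟨n, k⟩, rfl⟩
      exact ⟨e (n, k - 1), he_mem _, by simp [hshift]⟩
    · exact (AddMonoidHomClass.isometry_of_norm T hT).isClosedEmbedding.isClosedMap _ hK
  let V : K →ₗᵢ[ℝ] K :=
    { toLinearMap := (T : H →ₗ[ℝ] H).restrict fun x hx => hmaps ⟨x, hx, rfl⟩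
      norm_map' := fun x => hT x }
  have hV : Function.Surjective V := fun y => by
    obtain ⟨x, hx, hxy⟩ := honto y.2
    exact ⟨⟨x, hx⟩, Subtype.ext hxy⟩
  exact ⟨K, .ofSurjective V hV, hK, fun x => rfl, fun i => ⟨e i, he_mem i⟩,
    K.subtypeₗᵢ.orthonormal_comp_iff.mp he, fun n k => Subtype.ext (hshift n k)⟩

theorem of_injective_comp_eq [CompleteSpace K] [CompleteSpace H] {T : K →L[ℝ] K}
    {T' : H →L[ℝ] H} (hT : ∀ x, ‖T x‖ = ‖x‖) (hT' : ∀ x, ‖T' x‖ = ‖x‖) {S : K →L[ℝ] H}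
    (hS : Function.Injective S) (hST : ∀ x, S (T x) = T' (S x))
    (h : HasCountableLebesgueComponent T) : HasCountableLebesgueComponent T' := by
  obtain ⟨K₀, V, hK₀, hVT, hV⟩ := h.exists_linearIsometryEquiv_restrict hT
  have : CompleteSpace K₀ := hK₀.completeSpace_coe
  set A := S ∘L K₀.subtypeL
  have hA : Function.Injective A := hS.comp Subtype.val_injective
  have hAV : A ∘L (V : K₀ →L[ℝ] K₀) = T' ∘L A :=
    ContinuousLinearMap.ext fun x => by simp [A, hVT, hST]
  have hVV : (V : K₀ →L[ℝ] K₀) ∘L ContinuousLinearMap.adjoint (V : K₀ →L[ℝ] K₀) = 1 := by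
    ext x; simp
  obtain ⟨W, hW⟩ := ContinuousLinearMap.exists_linearIsometry_comp_eq hA hAV
    (ContinuousLinearMap.commute_adjoint_comp_self_of_comp_eq hVV
      ((ContinuousLinearMap.norm_map_iff_adjoint_comp_self T').mp hT') hAV)
  exact hV.of_linearIsometry_comp_eq W hW

end HasCountableLebesgueComponent

theorem LinearMap.exists_bound_of_nonneg {E F : Type*}
    [NormedAddCommGroup E] [Lattice E] [HasSolidNorm E] [IsOrderedAddMonoid E] [NormedSpace ℝ E]
    [PosSMulMono ℝ E] [CompleteSpace E]
    [NormedAddCommGroup F] [Lattice F] [HasSolidNorm F] [IsOrderedAddMonoid F] [NormedSpace ℝ F]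
    (S : E →ₗ[ℝ] F) (hS : ∀ g, 0 ≤ g → 0 ≤ S g) : ∃ C, ∀ g, ‖S g‖ ≤ C * ‖g‖ := by
  have hmono : Monotone S := fun a b hab => by simpa using hS _ (sub_nonneg.mpr hab)
  have hnorm_mono : ∀ {a b}, 0 ≤ a → a ≤ b → ‖S a‖ ≤ ‖S b‖ := fun ha hab =>
    norm_le_norm_of_abs_le_abs <| by
      rw [abs_of_nonneg (hS _ ha), abs_of_nonneg (hS _ (ha.trans hab))]
      exact hmono hab
  suffices ∃ C, ∀ g, 0 ≤ g → ‖S g‖ ≤ C * ‖g‖ by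
    obtain ⟨C, hC⟩ := this
    refine ⟨C, fun g => (norm_le_norm_of_abs_le_abs ?_).trans
      ((hC _ (abs_nonneg g)).trans_eq (by rw [norm_abs_eq_norm]))⟩
    rw [abs_of_nonneg (hS _ (abs_nonneg g))]
    exact abs_le'.mpr ⟨hmono (le_abs_self g), by simpa using hmono (neg_le_abs g)⟩
  by_contra! hcon
  have hpick : ∀ n : ℕ, ∃ h, 0 ≤ h ∧ ‖h‖ ≤ (1 / 2 : ℝ) ^ n ∧ (n : ℝ) < ‖S h‖ := by
    intro n
    obtain ⟨g, hg0, hg⟩ := hcon (n * 2 ^ n)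
    have hg_pos : 0 < ‖g‖ := norm_pos_iff.mpr (by rintro rfl; simp at hg)
    have hc : 0 < (2 ^ n * ‖g‖)⁻¹ := by positivity
    refine ⟨(2 ^ n * ‖g‖)⁻¹ • g, smul_nonneg hc.le hg0, ?_, ?_⟩
    · rw [norm_smul, Real.norm_of_nonneg hc.le, mul_inv, mul_assoc, inv_mul_cancel₀ hg_pos.ne',
        mul_one, one_div_pow, one_div]
    · rw [map_smul, norm_smul, Real.norm_of_nonneg hc.le]
      calc (n : ℝ) = (2 ^ n * ‖g‖)⁻¹ * (n * 2 ^ n * ‖g‖) := by field_simp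
        _ < (2 ^ n * ‖g‖)⁻¹ * ‖S g‖ := by gcongr
  choose h hh0 hhn hhS using hpick
  have hsum : Summable h := Summable.of_norm_bounded summable_geometric_two hhn
  obtain ⟨n, hn⟩ := exists_nat_gt ‖S (∑' n, h n)‖
  have := hnorm_mono (hh0 n) (hsum.le_tsum n fun i _ => hh0 i)
  linarith [hhS n]

namespace MeasureTheory.Lp

variable {α β : Type*} [MeasurableSpace α] [MeasurableSpace β] {μ : Measure α} {ν : Measure β}
  {p : ℝ≥0∞}

instance : PosSMulMono ℝ (Lp ℝ p μ) where
  smul_le_smul_of_nonneg_left c hc f g hfg := by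
    rw [← coeFn_le] at hfg ⊢
    filter_upwards [hfg, coeFn_smul c f, coeFn_smul c g] with x hx hf hg
    rw [hf, hg]
    exact mul_le_mul_of_nonneg_left hx hc

lemma norm_eq_of_ae_eq_comp {E : Type*} [NormedAddCommGroup E] {φ : α → β}
    (hφ : MeasurePreserving φ μ ν) {f : Lp E p ν} {g : Lp E p μ} (hg : g =ᵐ[μ] f ∘ φ) :
    ‖g‖ = ‖f‖ := by
  rw [← norm_compMeasurePreserving f hφ]
  exact congrArg _ (Lp.ext (hg.trans (coeFn_compMeasurePreserving f hφ).symm))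

end MeasureTheory.Lp

theorem stmt13_general {X Y : Type*} [MeasurableSpace X] [MeasurableSpace Y]
    (μ : Measure X) (ν : Measure Y)
    (φ : X → X) (ψ : Y → Y)
    (hφ : MeasurePreserving φ μ μ) (hψ : MeasurePreserving ψ ν ν)
    (Tφ : Lp ℝ 2 μ →L[ℝ] Lp ℝ 2 μ)
    (hTφ : ∀ f : Lp ℝ 2 μ, (Tφ f : X → ℝ) =ᵐ[μ] (f : X → ℝ) ∘ φ)
    (Tψ : Lp ℝ 2 ν →L[ℝ] Lp ℝ 2 ν)
    (hTψ : ∀ g : Lp ℝ 2 ν, (Tψ g : Y → ℝ) =ᵐ[ν] (g : Y → ℝ) ∘ ψ)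
    (S : Lp ℝ 2 ν →ₗ[ℝ] Lp ℝ 2 μ) (hinj : Function.Injective S)
    (hMarkov : IsMarkov ν μ S)
    (hfact : ∀ g : Lp ℝ 2 ν, Tφ (S g) = S (Tψ g))
    (hLeb : HasCountableLebesgueComponent (⇑Tψ)) :
    HasCountableLebesgueComponent (⇑Tφ) := by
  obtain ⟨C, hC⟩ := S.exists_bound_of_nonneg hMarkov.1
  exact hLeb.of_injective_comp_eq (fun g => Lp.norm_eq_of_ae_eq_comp hψ (hTψ g))
    (fun f => Lp.norm_eq_of_ae_eq_comp hφ (hTφ f)) (S := S.mkContinuous C hC) hinj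
    fun g => (hfact g).symm

/-- Let `(X, φ)` and `(Y, ψ)` be measure-preserving systems on probability
spaces, with Koopman operators `T_φ`, `T_ψ` on the respective (real) `L²` spaces, and suppose
`(Y, ψ)` is a factor of `(X, φ)`, i.e. there is an injective Markov operator
`S : L²(Y) → L²(X)` with `T_φ S = S T_ψ`. If `T_ψ` has a countable Lebesgue component, then
so does `T_φ`. -/
theorem stmt13 {X Y : Type*} [MeasurableSpace X] [MeasurableSpace Y]
    (μ : Measure X) (ν : Measure Y) [IsProbabilityMeasure μ] [IsProbabilityMeasure ν]
    (φ : X → X) (ψ : Y → Y)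
    (hφ : MeasurePreserving φ μ μ) (hψ : MeasurePreserving ψ ν ν)
    (Tφ : Lp ℝ 2 μ →L[ℝ] Lp ℝ 2 μ)
    (hTφ : ∀ f : Lp ℝ 2 μ, (Tφ f : X → ℝ) =ᵐ[μ] (f : X → ℝ) ∘ φ)
    (Tψ : Lp ℝ 2 ν →L[ℝ] Lp ℝ 2 ν)
    (hTψ : ∀ g : Lp ℝ 2 ν, (Tψ g : Y → ℝ) =ᵐ[ν] (g : Y → ℝ) ∘ ψ)
    (S : Lp ℝ 2 ν →ₗ[ℝ] Lp ℝ 2 μ) (hinj : Function.Injective S)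
    (hMarkov : IsMarkov ν μ S)
    (hfact : ∀ g : Lp ℝ 2 ν, Tφ (S g) = S (Tψ g))
    (hLeb : HasCountableLebesgueComponent (⇑Tψ)) :
    HasCountableLebesgueComponent (⇑Tφ) :=
  stmt13_general μ ν φ ψ hφ hψ Tφ hTφ Tψ hTψ S hinj hMarkov hfact hLeb
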